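/- Let f̃(x) = Σ_{k=0}^∞ c̃_k x^{2k+1} be absolutely convergent for all real x, let β ≠ 0 and x ≥ 0. Then ∫_0^x φ(βt) f̃(t) dt = (1/√(2π)) Σ_{k=0}^∞ ((2k)!! c̃_k / β^{2k+2}) · P(k+1, β²x²/2). -/

import Mathlib

open Real MeasureTheory

/-- Standard normal density. -/
noncomputable def stdPdf (t : ℝ) : ℝ := Real.exp (-t ^ 2 / 2) / Real.sqrt (2 * Real.pi)

/-- Lower regularized incomplete gamma function P(a,x) = γ(a,x)/Γ(a). -/
noncomputable def regGammaP (a x : ℝ) : ℝ :=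
  (∫ t in (0:ℝ)..x, t ^ (a - 1) * Real.exp (-t)) / Real.Gamma a

/-- (2k)!! = 2^k k! -/
noncomputable def evenDF (k : ℕ) : ℝ := 2 ^ k * k.factorial


/-
Each term of the series integrates in closed form: after the substitution u = β²t²/2 the
monomial t^(2k+1) against the Gaussian becomes the incomplete gamma integral
∫₀^{β²x²/2} u^k e^(-u) = k! · P(k+1, β²x²/2). Since the density is bounded by 1/√(2π) and
|c_k t^(2k+1)| ≤ |c_k x^(2k+1)| for t between 0 and x, dominated convergence lets the integral
pass through the sum.
-/

open Set Nat
open scoped Interval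

lemma continuous_stdPdf : Continuous stdPdf := by
  unfold stdPdf
  fun_prop

lemma abs_stdPdf_le (t : ℝ) : |stdPdf t| ≤ 1 / √(2 * π) := by
  unfold stdPdf
  rw [abs_div, abs_of_pos (exp_pos _), abs_of_nonneg (sqrt_nonneg _)]
  gcongr
  exact exp_le_one_iff.2 (by nlinarith [sq_nonneg t])

lemma regGammaP_natCast_add_one (k : ℕ) (y : ℝ) :
    regGammaP (k + 1) y = (∫ u in (0 : ℝ)..y, u ^ k * exp (-u)) / k ! := by
  simp only [regGammaP, Gamma_nat_eq_factorial, add_sub_cancel_right, rpow_natCast]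

lemma integral_exp_neg_mul_sq_mul_pow_odd {a : ℝ} (ha : a ≠ 0) (k : ℕ) (x : ℝ) :
    ∫ t in (0 : ℝ)..x, exp (-(a * t ^ 2)) * t ^ (2 * k + 1) =
      (∫ u in (0 : ℝ)..a * x ^ 2, u ^ k * exp (-u)) / (2 * a ^ (k + 1)) := by
  have hsubst := intervalIntegral.integral_comp_mul_deriv (a := 0) (b := x)
    (f := fun t => a * t ^ 2) (f' := fun t => 2 * a * t)
    (g := fun u => u ^ k * exp (-u) / (2 * a ^ (k + 1)))
    (fun t _ => by simpa [mul_comm, mul_left_comm] using (hasDerivAt_pow 2 t).const_mul a)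
    (by fun_prop) (by fun_prop)
  rw [intervalIntegral.integral_div, zero_pow two_ne_zero, mul_zero] at hsubst
  rw [← hsubst]
  refine intervalIntegral.integral_congr fun t _ => ?_
  simp only [Function.comp_apply]
  field_simp
  ring

lemma integral_stdPdf_mul_mul_pow_odd {β : ℝ} (hβ : β ≠ 0) (a : ℝ) (k : ℕ) (x : ℝ) :
    ∫ t in (0 : ℝ)..x, stdPdf (β * t) * (a * t ^ (2 * k + 1)) =
      1 / √(2 * π) * (evenDF k * a / β ^ (2 * k + 2) * regGammaP (k + 1) (β ^ 2 * x ^ 2 / 2)) := by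
  have hdensity : ∀ t, stdPdf (β * t) * (a * t ^ (2 * k + 1)) =
      a / √(2 * π) * (exp (-(β ^ 2 / 2 * t ^ 2)) * t ^ (2 * k + 1)) := fun t => by
    unfold stdPdf
    ring_nf
  have hlimit : β ^ 2 / 2 * x ^ 2 = β ^ 2 * x ^ 2 / 2 := by ring
  have hscale : (β ^ 2 / 2) ^ (k + 1) = β ^ (2 * k + 2) / 2 ^ (k + 1) := by
    rw [div_pow, ← pow_mul, mul_add, mul_one]
  rw [intervalIntegral.integral_congr fun t _ => hdensity t, intervalIntegral.integral_const_mul,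
    integral_exp_neg_mul_sq_mul_pow_odd (by positivity), hlimit, hscale,
    regGammaP_natCast_add_one, evenDF]
  field_simp
  ring

lemma hasSum_integral_mul_tsum_pow {g : ℝ → ℝ} {M : ℝ} (hg : Continuous g) (hgM : ∀ t, |g t| ≤ M)
    (c : ℕ → ℝ) (n : ℕ → ℕ) {x : ℝ} (hx : Summable fun k => |c k * x ^ n k|) :
    HasSum (fun k => ∫ t in (0 : ℝ)..x, g t * (c k * t ^ n k))
      (∫ t in (0 : ℝ)..x, g t * ∑' k, c k * t ^ n k) := by
  have hdom : ∀ k, ∀ t ∈ Ι 0 x, |c k * t ^ n k| ≤ |c k * x ^ n k| := fun k t ht => by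
    have htx : |t| ≤ |x| := by
      simpa using abs_sub_left_of_mem_uIcc (uIoc_subset_uIcc ht)
    simp only [abs_mul, abs_pow]
    gcongr
  refine intervalIntegral.hasSum_integral_of_dominated_convergence
    (fun k _ => M * |c k * x ^ n k|)
    (fun k => (hg.mul (by fun_prop)).aestronglyMeasurable)
    (fun k => .of_forall fun t ht => ?_) (.of_forall fun _ _ => hx.mul_left M)
    intervalIntegrable_const (.of_forall fun t ht => ?_)
  · rw [Real.norm_eq_abs, abs_mul]
    exact mul_le_mul (hgM t) (hdom k t ht) (abs_nonneg _) ((abs_nonneg _).trans (hgM t))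
  · have hsummable := hx.of_nonneg_of_le (fun k => abs_nonneg _) fun k => hdom k t ht
    exact hsummable.of_abs.hasSum.mul_left _

theorem integral_pdf_mul_odd_series_general (c : ℕ → ℝ) (β x : ℝ) (hβ : β ≠ 0)
    (habs : ∀ y : ℝ, Summable fun k : ℕ => |c k * y ^ (2 * k + 1)|) :
    ∫ t in (0:ℝ)..x, stdPdf (β * t) * ∑' k : ℕ, c k * t ^ (2 * k + 1) =
      (1 / Real.sqrt (2 * Real.pi)) * ∑' k : ℕ,
        (evenDF k * c k / β ^ (2 * k + 2)) *
          regGammaP (k + 1) (β ^ 2 * x ^ 2 / 2) := by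
  rw [← (hasSum_integral_mul_tsum_pow (g := fun t => stdPdf (β * t))
    (continuous_stdPdf.comp (continuous_const_mul β)) (fun t => abs_stdPdf_le (β * t))
    c _ (habs x)).tsum_eq]
  simp_rw [integral_stdPdf_mul_mul_pow_odd hβ, tsum_mul_left]

theorem integral_pdf_mul_odd_series (c : ℕ → ℝ) (β x : ℝ) (hβ : β ≠ 0) (hx : 0 ≤ x)
    (habs : ∀ y : ℝ, Summable fun k : ℕ => |c k * y ^ (2 * k + 1)|) :
    ∫ t in (0:ℝ)..x, stdPdf (β * t) * ∑' k : ℕ, c k * t ^ (2 * k + 1) =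
      (1 / Real.sqrt (2 * Real.pi)) * ∑' k : ℕ,
        (evenDF k * c k / β ^ (2 * k + 2)) *
          regGammaP (k + 1) (β ^ 2 * x ^ 2 / 2) :=
  integral_pdf_mul_odd_series_general c β x hβ habs
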